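/- arXiv:2105.06282 — 4 statements merged into one kernel-verified Lean document; each statement's English description precedes it below -/
import Mathlib

section
/- Let K ≥ 2 and 1 ≤ L ≤ K be integers with 2L ≤ K + 1. For k ∈ {1,…,K}, define the window W(k) = { Mod(k + i, K) : i ∈ {0,1,…,L−1} }, where Mod(b,K) denotes the representative of b modulo K in {1,…,K}. Then for any j, k ∈ {1,…,K} with k ≠ j, the window W(k) does not contain both j and Mod(j + L − 1, K). -/
/-- The representative of `b` modulo `K` in `{1, …, K}`. -/
def mod1 (b K : ℤ) : ℤ := (b - 1) % K + 1

/-- The window of `L` cyclically consecutive cache-node indices starting at `k`. -/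
def window (K L k : ℤ) : Finset ℤ :=
  (Finset.range L.toNat).image (fun i : ℕ => mod1 (k + (i : ℤ)) K)

theorem key_point (K L : ℤ) (hK : 2 ≤ K) (hL : 1 ≤ L) (hLK : L ≤ K)
    (h2L : 2 * L ≤ K + 1) (j k : ℤ) (hj1 : 1 ≤ j) (hjK : j ≤ K)
    (hk1 : 1 ≤ k) (hkK : k ≤ K) (hne : k ≠ j) :
    ¬ (j ∈ window K L k ∧ mod1 (j + L - 1) K ∈ window K L k) := by
  rintro ⟨h1, h2⟩
  simp only [window, Finset.mem_image, Finset.mem_range, mod1] at h1 h2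
  obtain ⟨a, ha, hja⟩ := h1
  obtain ⟨b, hb, hjb⟩ := h2
  have hK0 : (0:ℤ) < K := by omega
  have haL : (a:ℤ) < L := by omega
  have hbL : (b:ℤ) < L := by omega
  have ha0 : (0:ℤ) ≤ (a:ℤ) := Int.ofNat_nonneg a
  have hb0 : (0:ℤ) ≤ (b:ℤ) := Int.ofNat_nonneg b
  have ej : (j - 1) % K = j - 1 := Int.emod_eq_of_lt (by omega) (by omega)
  have e1 : (k + (a:ℤ) - 1) % K = (j - 1) % K := by omega
  have d1 : K ∣ (j - 1) - (k + (a:ℤ) - 1) := Int.ModEq.dvd e1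
  have e2 : (k + (b:ℤ) - 1) % K = (j + L - 1 - 1) % K := by omega
  have d2 : K ∣ (j + L - 1 - 1) - (k + (b:ℤ) - 1) := Int.ModEq.dvd e2
  have d3 : K ∣ ((b:ℤ) - (a:ℤ)) - (L - 1) := by
    have h := dvd_sub d2 d1
    have heq : ((j + L - 1 - 1) - (k + (b:ℤ) - 1)) - ((j - 1) - (k + (a:ℤ) - 1))
        = -(((b:ℤ) - (a:ℤ)) - (L - 1)) := by ring
    rw [heq] at h
    exact dvd_neg.mp h
  have hz : ((b:ℤ) - (a:ℤ)) - (L - 1) = 0 :=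
    Int.eq_zero_of_abs_lt_dvd d3 (by rw [abs_lt]; omega)
  have djk : K ∣ j - k := by
    have h : (j - 1) - (k + (a:ℤ) - 1) = (j - k) - (a:ℤ) := by ring
    rw [h] at d1
    have ha' : (a:ℤ) = 0 := by omega
    rwa [ha', sub_zero] at d1
  have := Int.eq_zero_of_abs_lt_dvd djk (by rw [abs_lt]; omega)
  omega
end

section
/- Let 2 ≤ L ≤ K be integers with K ≤ 2L − 2. Define the window W(k) = { Mod(k + i, K) : i ∈ {0,…,L−1} } with Mod(b,K) ∈ {1,…,K}. Then there exists k ∈ {2,…,K} such that both 1 ∈ W(k) and L ∈ W(k). -/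
theorem key_point_converse (K L : ℤ) (hL : 2 ≤ L) (hLK : L ≤ K)
    (hK : K ≤ 2 * L - 2) :
    ∃ k, 2 ≤ k ∧ k ≤ K ∧ (1 : ℤ) ∈ window K L k ∧ L ∈ window K L k := by
  refine ⟨K - L + 2, by omega, by omega, ?_, ?_⟩
  · -- i = L - 1 : k + i = K + 1, mod1 = 1
    refine Finset.mem_image.mpr ⟨(L - 1).toNat, Finset.mem_range.mpr (by omega), ?_⟩
    have h1 : ((L - 1).toNat : ℤ) = L - 1 := by omega
    rw [h1]
    show (K - L + 2 + (L - 1) - 1) % K + 1 = 1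
    have : K - L + 2 + (L - 1) - 1 = K := by ring
    rw [this, Int.emod_self]; norm_num
  · -- i = 2L - K - 2 : k + i = L, mod1 = L
    refine Finset.mem_image.mpr ⟨(2 * L - K - 2).toNat, Finset.mem_range.mpr (by omega), ?_⟩
    have h1 : ((2 * L - K - 2).toNat : ℤ) = 2 * L - K - 2 := by omega
    rw [h1]
    show (K - L + 2 + (2 * L - K - 2) - 1) % K + 1 = L
    have h2 : K - L + 2 + (2 * L - K - 2) - 1 = L - 1 := by ring
    rw [h2, Int.emod_eq_of_lt (by omega) (by omega)]
    ring
end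

section
/- Let 2 ≤ L ≤ K be integers and define windows W(k) = { Mod(k + i, K) : i ∈ {0,…,L−1} } with Mod(b,K) ∈ {1,…,K}. Then the following are equivalent: (i) there exists k ∈ {2,…,K} with {1, L} ⊆ W(k); (ii) K ≤ 2L − 2. -/
lemma aux_zero (K c : ℤ) (hK : 0 < K) (h1 : -K < K * c) (h2 : K * c < K) : c = 0 := by
  have habs : |K * c| < K := abs_lt.mpr ⟨h1, h2⟩
  rw [abs_mul, abs_of_pos hK] at habs
  have : |c| < 1 := lt_of_mul_lt_mul_left (by linarith) hK.le
  have := abs_lt.mp this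
  omega

theorem key_point_characterization (K L : ℤ) (hL : 2 ≤ L) (hLK : L ≤ K) :
    (∃ k, 2 ≤ k ∧ k ≤ K ∧ ({1, L} : Finset ℤ) ⊆ window K L k) ↔ K ≤ 2 * L - 2 := by
  have hK : 0 < K := by omega
  constructor
  · rintro ⟨k, hk2, hkK, hsub⟩
    have h1 : (1 : ℤ) ∈ window K L k := hsub (by simp)
    have hLm : L ∈ window K L k := hsub (by simp)
    simp only [window, Finset.mem_image, Finset.mem_range] at h1 hLm
    obtain ⟨i, hi, hi1⟩ := h1
    obtain ⟨j, hj, hj1⟩ := hLm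
    have hiL : (i : ℤ) < L := by omega
    have hjL : (j : ℤ) < L := by omega
    unfold mod1 at hi1 hj1
    -- first: k + i - 1 = K
    have e1 : (k + (i : ℤ) - 1) % K = 0 := by omega
    obtain ⟨c, hc⟩ := Int.dvd_of_emod_eq_zero e1
    have hci : (i : ℤ) ≥ 0 := Int.natCast_nonneg i
    have hc1 : c - 1 = 0 := by
      apply aux_zero K _ hK
      · have : K * (c - 1) = (k + (i : ℤ) - 1) - K := by rw [hc]; ring
        rw [this]; omega
      · have : K * (c - 1) = (k + (i : ℤ) - 1) - K := by rw [hc]; ring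
        rw [this]; omega
    have hkiK : k + (i : ℤ) - 1 = K := by
      have : c = 1 := by omega
      rw [this] at hc; omega
    -- second: k + j = L
    have e2 : (k + (j : ℤ) - 1) % K = L - 1 := by omega
    have hdm := Int.mul_ediv_add_emod (k + (j : ℤ) - 1) K
    rw [e2] at hdm
    have hc2 : K * ((k + (j : ℤ) - 1) / K) = k + (j : ℤ) - L := by linarith
    have hc20 : (k + (j : ℤ) - 1) / K = 0 := by
      apply aux_zero K _ hK
      · rw [hc2]; omega
      · rw [hc2]; omega
    rw [hc20, mul_zero] at hc2
    omega
  · intro hK2L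
    refine ⟨K - L + 2, by omega, by omega, ?_⟩
    intro x hx
    simp only [Finset.mem_insert, Finset.mem_singleton] at hx
    simp only [window, Finset.mem_image, Finset.mem_range]
    rcases hx with rfl | hx
    · refine ⟨(L - 1).toNat, by omega, ?_⟩
      have h : ((L - 1).toNat : ℤ) = L - 1 := by omega
      unfold mod1
      rw [h]
      have e : K - L + 2 + (L - 1) - 1 = K := by ring
      rw [e, Int.emod_self]
      norm_num
    · rw [hx]
      refine ⟨(2 * L - 2 - K).toNat, by omega, ?_⟩
      have h : ((2 * L - 2 - K).toNat : ℤ) = 2 * L - 2 - K := by omega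
      unfold mod1
      rw [h]
      have e : K - L + 2 + (2 * L - 2 - K) - 1 = L - 1 := by ring
      rw [e, Int.emod_eq_of_lt (by omega) (by omega)]
      omega
end

section
/- Let K ≥ 3 and 2 ≤ L ≤ K be integers with 2L ≤ K + 1, and define windows W(k) = { Mod(k + i, K) : i ∈ {0,…,L−1} } with Mod(b,K) ∈ {1,…,K}. Then: (i) for every single element j ∈ W(1) there exists k ∈ {2,…,K} with j ∈ W(k); (ii) the set {1, L} ⊆ W(1) satisfies {1, L} ⊄ W(k) for all k ∈ {2,…,K}. Hence the minimum cardinality ω of a subset S ⊆ W(1) with S ⊄ W(k) for all k ∈ {2,…,K} equals 2. -/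
lemma mem_window_iff {K L k j : ℤ} (hL : 0 ≤ L) :
    j ∈ window K L k ↔ ∃ i : ℤ, 0 ≤ i ∧ i < L ∧ j = mod1 (k + i) K := by
  simp only [window, Finset.mem_image, Finset.mem_range]
  constructor
  · rintro ⟨i, hi, rfl⟩
    exact ⟨(i : ℤ), Int.ofNat_nonneg i, by omega, rfl⟩
  · rintro ⟨i, h0, h1, rfl⟩
    refine ⟨i.toNat, by omega, ?_⟩
    rw [Int.toNat_of_nonneg h0]

lemma mod1_eq_self {b K : ℤ} (h1 : 1 ≤ b) (h2 : b ≤ K) : mod1 b K = b := by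
  unfold mod1
  rw [Int.emod_eq_of_lt (by omega) (by omega)]
  ring

lemma mod1_add_K {b K : ℤ} : mod1 (b + K) K = mod1 b K := by
  unfold mod1
  have h : b + K - 1 = b - 1 + K * 1 := by ring
  rw [h, Int.add_mul_emod_self_left]

/-- If `1 ≤ a < 2K` and `a % K = r` with `0 ≤ r < K`, then `a = r` or `a = r + K`. -/
lemma emod_cases {a K : ℤ} (hK : 0 < K) (h0 : 0 ≤ a) (h1 : a < 2 * K) :
    a % K = a ∨ a % K = a - K := by
  rcases lt_or_ge a K with h | h
  · left; exact Int.emod_eq_of_lt h0 h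
  · right
    have h2 := Int.emod_eq_of_lt (by omega : (0:ℤ) ≤ a - K) (by omega : a - K < K)
    have h3 : a - K = a + K * (-1) := by ring
    rw [h3, Int.add_mul_emod_self_left] at h2
    omega

/-- Characterization of `mod1 (k+i) K = c` for bounded inputs. -/
lemma mod1_eq_iff {x c K : ℤ} (hK : 0 < K) (hx1 : 1 ≤ x) (hx2 : x ≤ 2 * K)
    (hc1 : 1 ≤ c) (hc2 : c ≤ K) : mod1 x K = c ↔ (x = c ∨ x = c + K) := by
  unfold mod1
  constructor
  · intro h
    rcases emod_cases hK (by omega : (0:ℤ) ≤ x - 1) (by omega) with h' | h' <;> omega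
  · rintro (rfl | rfl)
    · rw [Int.emod_eq_of_lt (by omega) (by omega)]; ring
    · have h : c + K - 1 = c - 1 + K * 1 := by ring
      rw [h, Int.add_mul_emod_self_left, Int.emod_eq_of_lt (by omega) (by omega)]; ring

theorem two_shares_necessary_and_sufficient (K L : ℤ) (hK : 3 ≤ K) (hL : 2 ≤ L)
    (hLK : L ≤ K) (h2L : 2 * L ≤ K + 1) :
    (∀ j ∈ window K L 1, ∃ k, 2 ≤ k ∧ k ≤ K ∧ j ∈ window K L k) ∧
    (({1, L} : Finset ℤ) ⊆ window K L 1 ∧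
      ∀ k, 2 ≤ k → k ≤ K → ¬ ({1, L} : Finset ℤ) ⊆ window K L k) ∧
    sInf {n : ℕ | ∃ S : Finset ℤ, S ⊆ window K L 1 ∧ S.card = n ∧
      ∀ k, 2 ≤ k → k ≤ K → ¬ S ⊆ window K L k} = 2 := by
  have hL0 : (0:ℤ) ≤ L := by omega
  -- Part (i)
  have part1 : ∀ j ∈ window K L 1, ∃ k, 2 ≤ k ∧ k ≤ K ∧ j ∈ window K L k := by
    intro j hj
    rw [mem_window_iff hL0] at hj
    obtain ⟨i, hi0, hiL, rfl⟩ := hj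
    rcases eq_or_lt_of_le (by omega : i ≤ L - 1) with hi | hi
    · -- i = L - 1 : use k = 2, index L - 2
      refine ⟨2, le_refl _, by omega, ?_⟩
      rw [mem_window_iff hL0]
      refine ⟨L - 2, by omega, by omega, ?_⟩
      rw [hi, show (1:ℤ) + (L - 1) = 2 + (L - 2) from by ring]
    · -- i ≤ L - 2 : use k = K + 2 + i - L, index L - 1
      refine ⟨K + 2 + i - L, by omega, by omega, ?_⟩
      rw [mem_window_iff hL0]
      refine ⟨L - 1, by omega, by omega, ?_⟩
      have h : K + 2 + i - L + (L - 1) = (1 + i) + K := by ring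
      rw [h, mod1_add_K]
  -- Part (ii)
  have hm1 : (1:ℤ) ∈ window K L 1 := by
    rw [mem_window_iff hL0]
    exact ⟨0, le_refl _, by omega,
      by rw [show (1:ℤ) + 0 = 1 from by ring, mod1_eq_self le_rfl (by omega)]⟩
  have hmL : L ∈ window K L 1 := by
    rw [mem_window_iff hL0]
    exact ⟨L - 1, by omega, by omega,
      by rw [show (1:ℤ) + (L - 1) = L from by ring, mod1_eq_self (by omega) hLK]⟩
  have hsub : ({1, L} : Finset ℤ) ⊆ window K L 1 := by
    intro x hx
    simp only [Finset.mem_insert, Finset.mem_singleton] at hx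
    rcases hx with h | h
    · rw [h]; exact hm1
    · rw [h]; exact hmL
  have hnot : ∀ k, 2 ≤ k → k ≤ K → ¬ ({1, L} : Finset ℤ) ⊆ window K L k := by
    intro k hk2 hkK hsubk
    have h1 : (1:ℤ) ∈ window K L k := hsubk (by simp)
    have hLm : L ∈ window K L k := hsubk (by simp)
    rw [mem_window_iff hL0] at h1 hLm
    obtain ⟨i, hi0, hiL, hi⟩ := h1
    obtain ⟨i', hi'0, hi'L, hi'⟩ := hLm
    have e1 : k + i = 1 ∨ k + i = 1 + K := by
      rw [← mod1_eq_iff (by omega) (by omega) (by omega) (by omega) (by omega)]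
      exact hi.symm
    have e2 : k + i' = L ∨ k + i' = L + K := by
      rw [← mod1_eq_iff (by omega) (by omega) (by omega) (by omega) (by omega)]
      exact hi'.symm
    omega
  refine ⟨part1, ⟨hsub, hnot⟩, ?_⟩
  -- Part (iii)
  have h1L : (1:ℤ) ≠ L := by omega
  have h2mem : 2 ∈ {n : ℕ | ∃ S : Finset ℤ, S ⊆ window K L 1 ∧ S.card = n ∧
      ∀ k, 2 ≤ k → k ≤ K → ¬ S ⊆ window K L k} := by
    refine ⟨{1, L}, hsub, ?_, hnot⟩
    rw [Finset.card_insert_of_notMem (by simp [h1L]), Finset.card_singleton]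
  refine le_antisymm (Nat.sInf_le h2mem) ?_
  refine le_csInf ⟨2, h2mem⟩ ?_
  rintro n ⟨S, hS1, hScard, hSnot⟩
  by_contra hn
  interval_cases n
  · -- n = 0 : S = ∅
    rw [Finset.card_eq_zero] at hScard
    exact hSnot 2 (le_refl _) (by omega) (hScard ▸ Finset.empty_subset _)
  · -- n = 1 : S = {j}
    rw [Finset.card_eq_one] at hScard
    obtain ⟨j, rfl⟩ := hScard
    have hj : j ∈ window K L 1 := hS1 (Finset.mem_singleton_self j)
    obtain ⟨k, hk2, hkK, hjk⟩ := part1 j hj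
    exact hSnot k hk2 hkK (Finset.singleton_subset_iff.mpr hjk)
end
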